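/- arXiv:2404.08476 — 3 statements merged into one kernel-verified Lean document; each statement's English description precedes it below -/
import Mathlib

section
/- Let Q be a finite nonempty subset of ℝ^d. Then there exist a unit vector u ∈ ℝ^d, a point q* ∈ Q, and T > 0 such that for all t ≥ T the point t·u has q* as its unique nearest point in Q. Consequently, for n ≥ 2 pairwise distinct sample points X_1, …, X_n with Q = {X_1,…,X_n} and α ≥ 1, the empirical lens depth LD̂ built with the sample Fermat distance D_{Q,α} satisfies LD̂(t·u) = LD̂(q*) for all t ≥ T; in particular LD̂ is eventually constant along this ray and does not vanish at infinity unless LD̂(q*) = 0. -/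
/-!
Let `q*` be a point of `Q` of maximal norm `r` and `u` a unit vector with `q* = r • u`. For `p ∈ Q`,
`‖t • u - p‖² - ‖t • u - q*‖² = ‖q* - p‖² + 2 (t - r) (r - ⟪u, p⟫)`, and `⟪u, p⟫ ≤ ‖p‖ ≤ r`, so every
`t ≥ r` has `q*` as unique nearest point. The Fermat distance only sees nearest points, hence it
does not distinguish `t • u` from `q*`, and neither does the lens depth built on it.
-/

open scoped BigOperators

/-- Cost of a path `l = [q₁, …, q_k]`: `Σ_{j} dist q_j q_{j+1} ^ α`. -/
noncomputable def pathCost {E : Type*} [PseudoMetricSpace E] (α : ℝ) (l : List E) : ℝ :=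
  ((l.zip l.tail).map fun p => dist p.1 p.2 ^ α).sum

/-- Sample Fermat distance between two points `a b ∈ Q` (as infimum over paths in `Q`
starting at `a` and ending at `b`). -/
noncomputable def sampleFermat {E : Type*} [PseudoMetricSpace E] (Q : Finset E) (α : ℝ)
    (a b : E) : ℝ :=
  sInf { c | ∃ l : List E, (∀ q ∈ l, q ∈ Q) ∧ l.head? = some a ∧ l.getLast? = some b ∧
    c = pathCost α l }

/-- `q` is the unique nearest point of `Q` to `x`. -/
def IsUniqueNearest {E : Type*} [PseudoMetricSpace E] (Q : Finset E) (x q : E) : Prop :=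
  q ∈ Q ∧ ∀ p ∈ Q, p ≠ q → dist x q < dist x p

/-- The nearest point `q_Q(x)` of `Q` to `x` (junk value `x` if there is no unique nearest
point). -/
noncomputable def nearestPt {E : Type*} [PseudoMetricSpace E] (Q : Finset E) (x : E) : E :=
  haveI := Classical.propDecidable (∃ q, IsUniqueNearest Q x q)
  if h : ∃ q, IsUniqueNearest Q x q then h.choose else x

/-- Sample Fermat distance `D_{Q,α}(x,y)` between arbitrary points of the ambient space. -/
noncomputable def fermatDist {E : Type*} [PseudoMetricSpace E] (Q : Finset E) (α : ℝ)
    (x y : E) : ℝ :=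
  sampleFermat Q α (nearestPt Q x) (nearestPt Q y)

/-- Empirical lens depth of `x` w.r.t. sample points `X₁,…,X_n` and distance `dd`. -/
noncomputable def lensDepth {E : Type*} (n : ℕ) (dd : E → E → ℝ) (X : Fin n → E) (x : E) : ℝ :=
  ((n.choose 2 : ℝ))⁻¹ *
    ∑ i : Fin n, ∑ j : Fin n,
      if i < j ∧ max (dd x (X i)) (dd x (X j)) ≤ dd (X i) (X j) then (1 : ℝ) else 0

/-- Modified sample Fermat distance `D^modif_{Q,α}(x,y)`. -/
noncomputable def modifFermat {E : Type*} [PseudoMetricSpace E] (Q : Finset E) (α : ℝ)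
    (x y : E) : ℝ :=
  sInf { c | ∃ q ∈ Q, c = dist x q ^ α + sampleFermat Q α q y }

open scoped RealInnerProductSpace

section NearestPoint

variable {E : Type*}

theorem nearestPt_eq_of_isUniqueNearest [PseudoMetricSpace E] {Q : Finset E} {x q : E}
    (h : IsUniqueNearest Q x q) : nearestPt Q x = q := by
  have hex : ∃ q, IsUniqueNearest Q x q := ⟨q, h⟩
  rw [nearestPt, dif_pos hex]
  obtain ⟨hmem, hlt⟩ := hex.choose_spec
  by_contra hne
  exact (h.2 _ hmem hne).asymm (hlt _ h.1 (Ne.symm hne))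

theorem isUniqueNearest_self [MetricSpace E] {Q : Finset E} {q : E} (hq : q ∈ Q) :
    IsUniqueNearest Q q q :=
  ⟨hq, fun _ _ hne => by simpa using hne.symm⟩

theorem fermatDist_eq_of_isUniqueNearest [MetricSpace E] {Q : Finset E} {x q : E} (α : ℝ)
    (h : IsUniqueNearest Q x q) : fermatDist Q α x = fermatDist Q α q := by
  funext y
  simp only [fermatDist, nearestPt_eq_of_isUniqueNearest h,
    nearestPt_eq_of_isUniqueNearest (isUniqueNearest_self h.1)]

theorem lensDepth_congr_left {n : ℕ} {dd : E → E → ℝ} (X : Fin n → E) {x y : E}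
    (h : dd x = dd y) : lensDepth n dd X x = lensDepth n dd X y := by
  simp only [lensDepth, h]

theorem exists_norm_eq_one_and_norm_smul_eq [NormedAddCommGroup E] [NormedSpace ℝ E]
    [Nontrivial E] (q : E) : ∃ u : E, ‖u‖ = 1 ∧ ‖q‖ • u = q := by
  rcases eq_or_ne q 0 with rfl | hq
  · obtain ⟨u, hu⟩ := exists_norm_eq E zero_le_one
    exact ⟨u, hu, by simp⟩
  · exact ⟨‖q‖⁻¹ • q, by simp [norm_smul, hq], by simp [smul_smul, hq]⟩

theorem isUniqueNearest_smul_of_forall_norm_le [NormedAddCommGroup E] [InnerProductSpace ℝ E]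
    {Q : Finset E} {u : E} {r t : ℝ} (hu : ‖u‖ = 1) (hmem : r • u ∈ Q)
    (hmax : ∀ p ∈ Q, ‖p‖ ≤ r) (hrt : r ≤ t) : IsUniqueNearest Q (t • u) (r • u) := by
  refine ⟨hmem, fun p hp hne => ?_⟩
  have hinner : ⟪u, p⟫ ≤ ‖p‖ := by simpa [hu] using real_inner_le_norm u p
  have hgap : 0 < ‖r • u - p‖ ^ 2 := pow_pos (norm_pos_iff.2 (sub_ne_zero.2 hne.symm)) 2
  have key : dist (t • u) p ^ 2 - dist (t • u) (r • u) ^ 2 =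
      ‖r • u - p‖ ^ 2 + 2 * (t - r) * (r - ⟪u, p⟫) := by
    simp only [dist_eq_norm, norm_sub_sq_real, ← sub_smul, norm_smul, real_inner_smul_left,
      Real.norm_eq_abs, hu, mul_one, sq_abs]
    ring
  refine lt_of_pow_lt_pow_left₀ 2 dist_nonneg ?_
  nlinarith [hmax p hp]

end NearestPoint

theorem lensDepth_fermatDist_eventually_constant_ray_general {d n : ℕ} (hd : 0 < d) (hn : 2 ≤ n)
    (X : Fin n → EuclideanSpace ℝ (Fin d)) (α : ℝ) (Q : Finset (EuclideanSpace ℝ (Fin d)))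
    (hQ : (Q : Set (EuclideanSpace ℝ (Fin d))) = Set.range X) :
    ∃ (u qstar : EuclideanSpace ℝ (Fin d)) (T : ℝ), ‖u‖ = 1 ∧ qstar ∈ Q ∧ 0 < T ∧
      ∀ t : ℝ, T ≤ t → IsUniqueNearest Q (t • u) qstar ∧
        lensDepth n (fermatDist Q α) X (t • u) = lensDepth n (fermatDist Q α) X qstar := by
  have hQne : Q.Nonempty := by
    rw [← Finset.coe_nonempty, hQ]
    exact Set.range_nonempty_iff_nonempty.2 ⟨⟨0, by omega⟩⟩
  obtain ⟨qstar, hqstar, hmax⟩ := Finset.exists_max_image Q (‖·‖) hQne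
  have : Nonempty (Fin d) := ⟨⟨0, hd⟩⟩
  obtain ⟨u, hu, hqu⟩ := exists_norm_eq_one_and_norm_smul_eq qstar
  refine ⟨u, qstar, ‖qstar‖ + 1, hu, hqstar, by positivity, fun t ht => ?_⟩
  have hnear : IsUniqueNearest Q (t • u) qstar := by
    have h := isUniqueNearest_smul_of_forall_norm_le hu (by rwa [hqu]) hmax (t := t) (by linarith)
    rwa [hqu] at h
  exact ⟨hnear, lensDepth_congr_left X (fermatDist_eq_of_isUniqueNearest α hnear)⟩

/-- there is a unit direction `u`, a point `q* ∈ Q` and `T > 0` such that every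
point `t • u` with `t ≥ T` has `q*` as unique nearest point in `Q`; consequently the empirical
lens depth with sample Fermat distance is eventually constant (equal to `LD̂(q*)`) along this
ray, so it does not vanish at infinity unless `LD̂(q*) = 0`. -/
theorem lensDepth_fermatDist_eventually_constant_ray {d n : ℕ} (hd : 0 < d) (hn : 2 ≤ n)
    (X : Fin n → EuclideanSpace ℝ (Fin d)) (hX : Function.Injective X)
    (α : ℝ) (hα : 1 ≤ α) (Q : Finset (EuclideanSpace ℝ (Fin d)))
    (hQ : (Q : Set (EuclideanSpace ℝ (Fin d))) = Set.range X) :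
    ∃ (u qstar : EuclideanSpace ℝ (Fin d)) (T : ℝ), ‖u‖ = 1 ∧ qstar ∈ Q ∧ 0 < T ∧
      ∀ t : ℝ, T ≤ t → IsUniqueNearest Q (t • u) qstar ∧
        lensDepth n (fermatDist Q α) X (t • u) = lensDepth n (fermatDist Q α) X qstar :=
  lensDepth_fermatDist_eventually_constant_ray_general hd hn X α Q hQ
end

section
/- Let Q = {X_1, …, X_n} be a set of n ≥ 2 pairwise distinct points of ℝ^d and α ≥ 1. Define the empirical lens depth of x ∈ ℝ^d by LD̂(x) := binom(n,2)^{-1} Σ_{1 ≤ i < j ≤ n} 1[max(D^modif_{Q,α}(x, X_i), D^modif_{Q,α}(x, X_j)) ≤ D_{Q,α}(X_i, X_j)]. If dist(x, Q)^α > max_{1 ≤ i < j ≤ n} D_{Q,α}(X_i, X_j), then LD̂(x) = 0. Consequently, LD̂(x) → 0 (indeed LD̂(x) is eventually 0) as dist(x, Q) → ∞: the empirical lens depth with the modified sample Fermat distance vanishes at infinity. -/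
open scoped BigOperators

/-- Empirical lens depth of `x` using the modified sample Fermat distance `D^modif_{Q,α}`
between `x` and the sample points and the sample Fermat distance `D_{Q,α}` between sample
points. -/
noncomputable def lensDepthModif {E : Type*} [PseudoMetricSpace E] (n : ℕ) (Q : Finset E)
    (α : ℝ) (X : Fin n → E) (x : E) : ℝ :=
  ((n.choose 2 : ℝ))⁻¹ *
    ∑ i : Fin n, ∑ j : Fin n,
      if i < j ∧ max (modifFermat Q α x (X i)) (modifFermat Q α x (X j))
          ≤ sampleFermat Q α (X i) (X j) then (1 : ℝ) else 0

/-!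
Since sample Fermat distances are nonnegative, every modified distance `D^modif_{Q,α}(x, y)`
is at least `dist(x, Q)^α`. Once this exceeds every `D_{Q,α}(Xᵢ, Xⱼ)`, no pair `Xᵢ, Xⱼ` puts
`x` in its lens, so every summand of `LD̂(x)` vanishes. As `dist(x, Q) → ∞`, so does
`dist(x, Q)^α`, and it eventually exceeds the finitely many pairwise distances.
-/

open Filter Metric

section

variable {E : Type*} [PseudoMetricSpace E]

lemma pathCost_nonneg (α : ℝ) (l : List E) : 0 ≤ pathCost α l :=
  List.sum_nonneg fun _ hc => by
    obtain ⟨_, _, rfl⟩ := List.mem_map.mp hc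
    exact Real.rpow_nonneg dist_nonneg α

lemma sampleFermat_nonneg (Q : Finset E) (α : ℝ) (a b : E) : 0 ≤ sampleFermat Q α a b :=
  Real.sInf_nonneg fun _ ⟨l, _, _, _, hc⟩ => hc ▸ pathCost_nonneg α l

lemma infDist_rpow_le_modifFermat {Q : Finset E} (hQ : Q.Nonempty) {α : ℝ} (hα : 0 ≤ α)
    (x y : E) : infDist x (Q : Set E) ^ α ≤ modifFermat Q α x y := by
  obtain ⟨q₀, hq₀⟩ := hQ
  refine le_csInf ⟨_, q₀, hq₀, rfl⟩ ?_
  rintro _ ⟨q, hq, rfl⟩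
  calc infDist x (Q : Set E) ^ α ≤ dist x q ^ α :=
        Real.rpow_le_rpow infDist_nonneg (infDist_le_dist_of_mem hq) hα
    _ ≤ dist x q ^ α + sampleFermat Q α q y := le_add_of_nonneg_right (sampleFermat_nonneg ..)

lemma lensDepthModif_eq_zero_of_sampleFermat_lt {n : ℕ} {Q : Finset E} {α : ℝ}
    {X : Fin n → E} {x : E} (hXQ : ∀ i, X i ∈ Q) (hα : 0 ≤ α)
    (hx : ∀ i j, i < j → sampleFermat Q α (X i) (X j) < infDist x (Q : Set E) ^ α) :
    lensDepthModif n Q α X x = 0 := by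
  refine mul_eq_zero_of_right _ <| Finset.sum_eq_zero fun i _ =>
    Finset.sum_eq_zero fun j _ => if_neg ?_
  rintro ⟨hij, hlens⟩
  have hfar := infDist_rpow_le_modifFermat ⟨_, hXQ i⟩ hα x (X i)
  exact (hx i j hij).not_ge (hfar.trans ((le_max_left _ _).trans hlens))

lemma eventually_sampleFermat_lt_infDist_rpow {ι β : Type*} [Finite ι] {l : Filter β}
    (Q : Finset E) {α : ℝ} (hα : 0 < α) (X : ι → E) {xs : β → E}
    (hxs : Tendsto (fun k => infDist (xs k) (Q : Set E)) l atTop) :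
    ∀ᶠ k in l, ∀ i j, sampleFermat Q α (X i) (X j) < infDist (xs k) (Q : Set E) ^ α := by
  have hpow := (tendsto_rpow_atTop hα).comp hxs
  simp only [eventually_all]
  exact fun i j => hpow.eventually_gt_atTop _

end

theorem lensDepthModif_vanishes_at_infinity_general {d n : ℕ}
    (X : Fin n → EuclideanSpace ℝ (Fin d))
    (α : ℝ) (hα : 1 ≤ α) (Q : Finset (EuclideanSpace ℝ (Fin d)))
    (hQ : (Q : Set (EuclideanSpace ℝ (Fin d))) = Set.range X) :
    (∀ x : EuclideanSpace ℝ (Fin d),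
      (∀ i j : Fin n, i < j → sampleFermat Q α (X i) (X j)
          < Metric.infDist x (Q : Set (EuclideanSpace ℝ (Fin d))) ^ α) →
      lensDepthModif n Q α X x = 0) ∧
    ∀ xs : ℕ → EuclideanSpace ℝ (Fin d),
      Filter.Tendsto (fun k => Metric.infDist (xs k) (Q : Set (EuclideanSpace ℝ (Fin d))))
        Filter.atTop Filter.atTop →
      (∀ᶠ k in Filter.atTop, lensDepthModif n Q α X (xs k) = 0) ∧
      Filter.Tendsto (fun k => lensDepthModif n Q α X (xs k)) Filter.atTop (nhds 0) := by
  have hXQ : ∀ i, X i ∈ Q := fun i => by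
    rw [← Finset.mem_coe, hQ]
    exact Set.mem_range_self i
  have hα₀ : 0 < α := zero_lt_one.trans_le hα
  have vanish := fun x => lensDepthModif_eq_zero_of_sampleFermat_lt (x := x) hXQ hα₀.le
  refine ⟨vanish, fun xs hxs => ?_⟩
  have hzero : ∀ᶠ k in atTop, lensDepthModif n Q α X (xs k) = 0 :=
    (eventually_sampleFermat_lt_infDist_rpow Q hα₀ X hxs).mono fun k hk =>
      vanish (xs k) fun i j _ => hk i j
  exact ⟨hzero, tendsto_const_nhds.congr' (hzero.mono fun _ h => h.symm)⟩

/-- if `dist(x,Q)^α` exceeds all pairwise sample Fermat distances `D_{Q,α}(Xᵢ,Xⱼ)`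
then the empirical lens depth with the modified sample Fermat distance vanishes at `x`;
consequently, along any sequence going to infinity away from `Q`, `LD̂` is eventually `0` and
tends to `0`: it vanishes at infinity. -/
theorem lensDepthModif_vanishes_at_infinity {d n : ℕ} (hn : 2 ≤ n)
    (X : Fin n → EuclideanSpace ℝ (Fin d)) (hX : Function.Injective X)
    (α : ℝ) (hα : 1 ≤ α) (Q : Finset (EuclideanSpace ℝ (Fin d)))
    (hQ : (Q : Set (EuclideanSpace ℝ (Fin d))) = Set.range X) :
    (∀ x : EuclideanSpace ℝ (Fin d),
      (∀ i j : Fin n, i < j → sampleFermat Q α (X i) (X j)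
          < Metric.infDist x (Q : Set (EuclideanSpace ℝ (Fin d))) ^ α) →
      lensDepthModif n Q α X x = 0) ∧
    ∀ xs : ℕ → EuclideanSpace ℝ (Fin d),
      Filter.Tendsto (fun k => Metric.infDist (xs k) (Q : Set (EuclideanSpace ℝ (Fin d))))
        Filter.atTop Filter.atTop →
      (∀ᶠ k in Filter.atTop, lensDepthModif n Q α X (xs k) = 0) ∧
      Filter.Tendsto (fun k => lensDepthModif n Q α X (xs k)) Filter.atTop (nhds 0) :=
  lensDepthModif_vanishes_at_infinity_general X α hα Q hQ
end

section
/- Let P be a Borel probability measure on ℝ^d and let the lens depth LD(x, P) be defined with respect to the Euclidean distance. Then LD(x, P) ≤ (P ⊗ P)({(x₁, x₂) : |x − x₁| ≤ |x₁ − x₂|}), and LD(x, P) → 0 as |x| → ∞; i.e. the (Euclidean) lens depth vanishes at infinity for every probability measure on ℝ^d. -/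
/-!
The lens of `x` lies in `{(x₁, x₂) | dist x x₁ ≤ dist x₁ x₂}`. If `x₁, x₂ ∈ closedBall o r` and
`3 r < dist x o`, then `dist x x₁ > 2 r ≥ dist x₁ x₂`; so for such `x` this set misses
`closedBall o r ×ˢ closedBall o r`, whose complement has `P ⊗ P`-mass tending to `0` as `r → ∞`.
-/

open scoped BigOperators

open MeasureTheory Metric Filter Topology Bornology

section LensDepth

variable {α : Type*} [PseudoMetricSpace α]

lemma tendsto_measure_compl_closedBall_atTop [MeasurableSpace α] [OpensMeasurableSpace α]
    (μ : Measure α) [IsFiniteMeasure μ] (o : α) :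
    Tendsto (fun r : ℝ => μ (closedBall o r)ᶜ) atTop (𝓝 0) := by
  have hempty : ⋂ r : ℝ, (closedBall o r)ᶜ = ∅ :=
    Set.eq_empty_of_forall_notMem fun y hy =>
      Set.mem_iInter.1 hy (dist y o) (mem_closedBall.2 le_rfl)
  have h := tendsto_measure_iInter_atTop (μ := μ) (s := fun r : ℝ => (closedBall o r)ᶜ)
    (fun r => measurableSet_closedBall.compl.nullMeasurableSet)
    (fun r s hrs => Set.compl_subset_compl.2 (closedBall_subset_closedBall hrs))
    ⟨0, measure_ne_top μ _⟩
  rwa [hempty, measure_empty] at h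

lemma setOf_dist_le_dist_subset_compl_closedBall {x o : α} {r : ℝ} (hx : 3 * r < dist x o) :
    {p : α × α | dist x p.1 ≤ dist p.1 p.2} ⊆ (closedBall (o, o) r)ᶜ := by
  rintro p (hp : dist x p.1 ≤ dist p.1 p.2) hball
  rw [← closedBall_prod_same, Set.mem_prod, mem_closedBall, mem_closedBall] at hball
  have h₁₂ : dist p.1 p.2 ≤ 2 * r := by
    linarith [dist_triangle_right p.1 p.2 o, hball.1, hball.2]
  have hx₁ : dist x o - r ≤ dist x p.1 := by
    linarith [dist_triangle x p.1 o, hball.1]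
  linarith

variable [MeasurableSpace (α × α)] (ρ : Measure (α × α))

lemma measure_lens_le_measure_setOf_dist_le_dist (x : α) :
    ρ {p : α × α | max (dist x p.1) (dist x p.2) ≤ dist p.1 p.2}
      ≤ ρ {p : α × α | dist x p.1 ≤ dist p.1 p.2} :=
  measure_mono fun _ hp => le_of_max_le_left (α := ℝ) hp

variable [OpensMeasurableSpace (α × α)] [IsFiniteMeasure ρ]

lemma tendsto_measure_setOf_dist_le_dist_cobounded :
    Tendsto (fun x : α => ρ {p : α × α | dist x p.1 ≤ dist p.1 p.2}) (cobounded α) (𝓝 0) := by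
  rcases isEmpty_or_nonempty α with _ | ⟨⟨o⟩⟩
  · exact tendsto_of_isEmpty
  refine ENNReal.tendsto_nhds_zero.2 fun ε hε => ?_
  obtain ⟨r, hr⟩ :=
    ((tendsto_measure_compl_closedBall_atTop ρ (o, o)).eventually (ge_mem_nhds hε)).exists
  filter_upwards [(tendsto_dist_right_cobounded_atTop o).eventually_gt_atTop (3 * r)] with x hx
  exact (measure_mono (setOf_dist_le_dist_subset_compl_closedBall hx)).trans hr

lemma tendsto_measure_lens_cobounded :
    Tendsto (fun x : α => ρ {p : α × α | max (dist x p.1) (dist x p.2) ≤ dist p.1 p.2})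
      (cobounded α) (𝓝 0) :=
  tendsto_of_tendsto_of_tendsto_of_le_of_le tendsto_const_nhds
    (tendsto_measure_setOf_dist_le_dist_cobounded ρ) (fun _ => zero_le)
    (measure_lens_le_measure_setOf_dist_le_dist ρ)

end LensDepth

open MeasureTheory in
/-- for any Borel probability measure `P` on `ℝ^d`, the (Euclidean) lens depth
`LD(x,P)` is bounded by `(P ⊗ P){(x₁,x₂) : |x − x₁| ≤ |x₁ − x₂|}` and vanishes at infinity:
`LD(x,P) → 0` as `|x| → ∞`. -/
theorem lensDepth_vanishes_at_infinity {d : ℕ}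
    (P : Measure (EuclideanSpace ℝ (Fin d))) [IsProbabilityMeasure P] :
    (∀ x : EuclideanSpace ℝ (Fin d),
      ((P.prod P) {p : EuclideanSpace ℝ (Fin d) × EuclideanSpace ℝ (Fin d) |
          max (dist x p.1) (dist x p.2) ≤ dist p.1 p.2}).toReal
        ≤ ((P.prod P) {p : EuclideanSpace ℝ (Fin d) × EuclideanSpace ℝ (Fin d) |
          dist x p.1 ≤ dist p.1 p.2}).toReal) ∧
    Filter.Tendsto
      (fun x : EuclideanSpace ℝ (Fin d) =>
        ((P.prod P) {p : EuclideanSpace ℝ (Fin d) × EuclideanSpace ℝ (Fin d) |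
          max (dist x p.1) (dist x p.2) ≤ dist p.1 p.2}).toReal)
      (Filter.comap (fun x : EuclideanSpace ℝ (Fin d) => ‖x‖) Filter.atTop) (nhds 0) := by
  refine ⟨fun x => ENNReal.toReal_mono (measure_ne_top _ _)
    (measure_lens_le_measure_setOf_dist_le_dist _ x), ?_⟩
  rw [comap_norm_atTop]
  exact (ENNReal.tendsto_toReal_zero_iff fun _ => measure_ne_top _ _).2
    (tendsto_measure_lens_cobounded (P.prod P))
end
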